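/- arXiv:1402.4790 — 2 statements merged into one kernel-verified Lean document; each statement's English description precedes it below -/
import Mathlib

section
/- Let D be a division ring, A ∈ M_2(D) be a rank 2 (hence invertible) matrix, d a 1-dimensional subspace of D² and e a 1-dimensional subspace of ᵗD². Then R_d ∩ L_e contains a rank 1 matrix that is adjacent to A if and only if d ≠ (A^{−1}e)^⊥, where A^{−1}e = { A^{−1} ᵗv : ᵗv ∈ e } is the 1-dimensional subspace of ᵗD² obtained by applying A^{−1} to the column vectors of e. -/
open Matrix

variable {D : Type*} [DivisionRing D]

/-- The rank of a matrix over a division ring: the dimension of its row space,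
i.e. of the left `D`-subspace of `D^n` spanned by the rows. -/
noncomputable def rowRank {m n : ℕ} (A : Matrix (Fin m) (Fin n) D) : ℕ :=
  Module.finrank D (Submodule.span D (Set.range fun i => A i))

/-- Two matrices are adjacent if their difference has rank one. -/
def Adjacent {m n : ℕ} (A B : Matrix (Fin m) (Fin n) D) : Prop :=
  rowRank (A - B) = 1

/-- `R(x)`: the set of matrices of the form `ᵗu x` for a fixed row vector `x`. -/
def Rvec {m n : ℕ} (x : Fin n → D) : Set (Matrix (Fin m) (Fin n) D) :=
  { M | ∃ u : Fin m → D, ∀ i j, M i j = u i * x j }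

/-- `L(ᵗy)`: the set of matrices of the form `ᵗy v` for a fixed column vector `ᵗy`. -/
def Lvec {m n : ℕ} (y : Fin m → D) : Set (Matrix (Fin m) (Fin n) D) :=
  { M | ∃ v : Fin n → D, ∀ i j, M i j = y i * v j }

/-- `R_d`: the matrices whose row space is contained in `d`. -/
def Rsub {m n : ℕ} (d : Submodule D (Fin n → D)) : Set (Matrix (Fin m) (Fin n) D) :=
  { M | ∀ i, M i ∈ d }

/-- `L_e`: the matrices whose column space (a right subspace, i.e. a `Dᵐᵒᵖ`-submodule)
is contained in `e`. -/
def Lsub {m n : ℕ} (e : Submodule Dᵐᵒᵖ (Fin m → D)) : Set (Matrix (Fin m) (Fin n) D) :=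
  { M | ∀ j, (fun i => M i j) ∈ e }

/-- The orthogonal set of a set `e` of column vectors. -/
def perpSet {m : ℕ} (e : Set (Fin m → D)) : Set (Fin m → D) :=
  { u | ∀ v ∈ e, ∑ i, u i * v i = 0 }

/-- The `p × q` matrix with upper-left block `B` and zeros elsewhere. -/
def pad {m n : ℕ} (p q : ℕ) (B : Matrix (Fin m) (Fin n) D) :
    Matrix (Fin p) (Fin q) D :=
  Matrix.of fun i j =>
    if hi : (i : ℕ) < m then if hj : (j : ℕ) < n then B ⟨i, hi⟩ ⟨j, hj⟩ else 0 else 0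

/-- `φ` is degenerate with respect to `A`. -/
def DegenerateAt {m n p q : ℕ} (φ : Matrix (Fin m) (Fin n) D → Matrix (Fin p) (Fin q) D)
    (A : Matrix (Fin m) (Fin n) D) : Prop :=
  ∃ x : Fin p → D, x ≠ 0 ∧ ∃ y : Fin q → D, y ≠ 0 ∧
    ∀ M : Matrix (Fin m) (Fin n) D, rowRank M ≤ 1 →
      φ (A + M) - φ A ∈ Rvec y ∪ Lvec x

/-- `φ` is degenerate: degenerate with respect to every matrix. -/
def Degenerate {m n p q : ℕ} (φ : Matrix (Fin m) (Fin n) D → Matrix (Fin p) (Fin q) D) :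
    Prop :=
  ∀ A, DegenerateAt φ A

/-- A map (sending `0` to `0`) is degenerate with respect to `0` iff it maps every matrix of
rank at most one into `R(y) ∪ L(ᵗx)` for some nonzero `y`, `x`. -/
def DegZero {m n p q : ℕ} (φ : Matrix (Fin m) (Fin n) D → Matrix (Fin p) (Fin q) D) :
    Prop :=
  ∃ x : Fin p → D, x ≠ 0 ∧ ∃ y : Fin q → D, y ≠ 0 ∧
    ∀ M : Matrix (Fin m) (Fin n) D, rowRank M ≤ 1 → φ M ∈ Rvec y ∪ Lvec x

/-- A standard adjacency preserver. -/
def Standard {m n p q : ℕ} (φ : Matrix (Fin m) (Fin n) D → Matrix (Fin p) (Fin q) D) :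
    Prop :=
  (m ≤ p ∧ n ≤ q ∧ ∃ τ : D ≃+* D, ∃ T : Matrix (Fin p) (Fin p) D,
    ∃ S : Matrix (Fin q) (Fin q) D, ∃ R : Matrix (Fin p) (Fin q) D,
    IsUnit T ∧ IsUnit S ∧ ∀ A, φ A = T * pad p q (A.map τ) * S + R) ∨
  (n ≤ p ∧ m ≤ q ∧ ∃ σ : D → D, Function.Bijective σ ∧ σ 1 = 1 ∧
    (∀ a b, σ (a + b) = σ a + σ b) ∧ (∀ a b, σ (a * b) = σ b * σ a) ∧
    ∃ T : Matrix (Fin p) (Fin p) D, ∃ S : Matrix (Fin q) (Fin q) D,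
    ∃ R : Matrix (Fin p) (Fin q) D, IsUnit T ∧ IsUnit S ∧
    ∀ A, φ A = T * pad p q (A.map σ).transpose * S + R)

/-- A division ring is EAS if every (unital) ring endomorphism of it is surjective. -/
def EAS (D : Type*) [DivisionRing D] : Prop :=
  ∀ f : D →+* D, Function.Surjective f

/-- A set of matrices is adjacent if any two distinct members are adjacent. -/
def IsAdjacentSet {m n : ℕ} (S : Set (Matrix (Fin m) (Fin n) D)) : Prop :=
  ∀ A ∈ S, ∀ B ∈ S, A ≠ B → Adjacent A B

/-!
Write `d = D x` and `e = ᵗy D`. A rank-one matrix of `R_d ∩ L_e` is `M = ᵗy (c x)`, and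
`M - A = (M A⁻¹ - 1) A` with `M A⁻¹ - 1 = ᵗy w - 1`, `w = c x A⁻¹`. If `w ᵗy = 0` then `ᵗy w`
squares to zero, so `ᵗy w - 1` is invertible and `M` is not adjacent to `A`; if `w ᵗy = 1` then
`w` lies in the left kernel of `ᵗy w - 1`, so `M - A` has rank at most one, and it is nonzero as
`M` has rank one and `A` rank two. As `w ᵗy = c (x A⁻¹ ᵗy)`, a suitable `c` exists iff
`x A⁻¹ ᵗy ≠ 0`, i.e. iff the line `d` is not the line `(A⁻¹e)^⊥`.
-/

open Module Submodule

theorem Submodule.exists_eq_span_singleton_of_finrank_eq_one {K V : Type*} [DivisionRing K]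
    [AddCommGroup V] [Module K V] {p : Submodule K V} (h : finrank K p = 1) :
    ∃ v ≠ 0, p = K ∙ v := by
  obtain ⟨⟨v, hv⟩, hv0, hspan⟩ := finrank_eq_one_iff'.mp h
  refine ⟨v, fun h0 => hv0 (Subtype.ext h0), le_antisymm (fun w hw => ?_)
    ((span_singleton_le_iff_mem _ _).mpr hv)⟩
  obtain ⟨c, hc⟩ := hspan ⟨w, hw⟩
  exact mem_span_singleton.mpr ⟨c, congrArg Subtype.val hc⟩

section RowRank

variable {k m n : ℕ}

theorem rowRank_eq_finrank_range_vecMulLinear (N : Matrix (Fin m) (Fin n) D) :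
    rowRank N = finrank D (LinearMap.range N.vecMulLinear) := by
  rw [range_vecMulLinear]
  rfl

theorem rowRank_eq_zero_iff {N : Matrix (Fin m) (Fin n) D} : rowRank N = 0 ↔ N = 0 := by
  rw [rowRank, Submodule.finrank_eq_zero, span_eq_bot, Set.forall_mem_range]
  exact ⟨fun h => funext h, fun h i => by rw [h]; rfl⟩

theorem rowRank_le_finrank_of_mem_Rsub {d : Submodule D (Fin n → D)}
    {N : Matrix (Fin m) (Fin n) D} (h : N ∈ Rsub d) : rowRank N ≤ finrank D d :=
  Submodule.finrank_mono (span_le.mpr (Set.range_subset_iff.mpr h))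

theorem rowRank_mul_le (X : Matrix (Fin m) (Fin n) D) (A : Matrix (Fin n) (Fin k) D) :
    rowRank (X * A) ≤ rowRank X := by
  have hcomp : (X * A).vecMulLinear = A.vecMulLinear ∘ₗ X.vecMulLinear :=
    LinearMap.ext fun u => (vecMul_vecMul u X A).symm
  rw [rowRank_eq_finrank_range_vecMulLinear, rowRank_eq_finrank_range_vecMulLinear, hcomp,
    LinearMap.range_comp]
  exact Submodule.finrank_map_le _ _

theorem rowRank_mul_of_mul_eq_one (X : Matrix (Fin m) (Fin n) D)
    {A B : Matrix (Fin n) (Fin n) D} (hAB : A * B = 1) : rowRank (X * A) = rowRank X := by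
  refine le_antisymm (rowRank_mul_le X A) ?_
  calc rowRank X = rowRank (X * A * B) := by rw [Matrix.mul_assoc, hAB, Matrix.mul_one]
    _ ≤ rowRank (X * A) := rowRank_mul_le _ B

theorem rowRank_of_mul_eq_one {C N : Matrix (Fin n) (Fin n) D} (h : C * N = 1) :
    rowRank N = n := by
  have hsurj : LinearMap.range N.vecMulLinear = ⊤ :=
    LinearMap.range_eq_top.mpr fun v => ⟨v ᵥ* C, by simp [vecMul_vecMul, h]⟩
  rw [rowRank_eq_finrank_range_vecMulLinear, hsurj, finrank_top, finrank_fin_fun]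

theorem rowRank_lt_of_vecMul_eq_zero {N : Matrix (Fin m) (Fin n) D} {z : Fin m → D}
    (hz : z ≠ 0) (h : z ᵥ* N = 0) : rowRank N < m := by
  have hrank := LinearMap.finrank_range_add_finrank_ker N.vecMulLinear
  have hker := Submodule.one_le_finrank_iff.mpr
    ((Submodule.ne_bot_iff (LinearMap.ker N.vecMulLinear)).mpr ⟨z, h, hz⟩)
  rw [finrank_fin_fun] at hrank
  rw [rowRank_eq_finrank_range_vecMulLinear]
  omega

theorem rowRank_sub_eq_rowRank_mul_sub_one {A B : Matrix (Fin n) (Fin n) D} (hBA : B * A = 1)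
    (hAB : A * B = 1) (M : Matrix (Fin n) (Fin n) D) :
    rowRank (M - A) = rowRank (M * B - 1) := by
  rw [← rowRank_mul_of_mul_eq_one (M * B - 1) hAB, sub_mul, Matrix.mul_assoc, hBA,
    Matrix.mul_one, Matrix.one_mul]

end RowRank

section VecMulVec

variable {m n : ℕ}

theorem rowRank_vecMulVec_le_one (u : Fin m → D) (w : Fin n → D) :
    rowRank (vecMulVec u w) ≤ 1 :=
  (rowRank_le_finrank_of_mem_Rsub fun i => smul_mem _ (u i) (mem_span_singleton_self w)).trans
    ((finrank_span_le_card {w}).trans (by simp))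

theorem rowRank_vecMulVec {u : Fin m → D} {w : Fin n → D} (hu : u ≠ 0) (hw : w ≠ 0) :
    rowRank (vecMulVec u w) = 1 := by
  have hle := rowRank_vecMulVec_le_one u w
  obtain ⟨i, hi⟩ := Function.ne_iff.mp hu
  obtain ⟨j, hj⟩ := Function.ne_iff.mp hw
  have hne : vecMulVec u w ≠ 0 := fun h0 => mul_ne_zero hi hj (congrFun (congrFun h0 i) j)
  have hpos := mt rowRank_eq_zero_iff.mp hne
  omega

theorem rowRank_vecMulVec_sub_one_of_dotProduct_eq_zero {u w : Fin n → D} (h : w ⬝ᵥ u = 0) :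
    rowRank (vecMulVec u w - 1) = n := by
  have hsq : vecMulVec u w * vecMulVec u w = 0 := by
    rw [vecMulVec_mul_vecMulVec, h, zero_smul, vecMulVec_zero]
  refine rowRank_of_mul_eq_one (C := -vecMulVec u w - 1) ?_
  calc (-vecMulVec u w - 1) * (vecMulVec u w - 1) = 1 - vecMulVec u w * vecMulVec u w := by
        noncomm_ring
    _ = 1 := by rw [hsq, sub_zero]

theorem vecMul_vecMulVec_sub_one_of_dotProduct_eq_one {u w : Fin n → D} (h : w ⬝ᵥ u = 1) :
    w ᵥ* (vecMulVec u w - 1) = 0 := by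
  rw [vecMul_sub, vecMul_vecMulVec, h, one_smul, vecMul_one, sub_self]

theorem vecMulVec_mem_Rsub (u : Fin m → D) {w : Fin n → D} {d : Submodule D (Fin n → D)}
    (hw : w ∈ d) : vecMulVec u w ∈ Rsub d :=
  fun i => d.smul_mem (u i) hw

theorem vecMulVec_mem_Lsub {e : Submodule Dᵐᵒᵖ (Fin m → D)} {u : Fin m → D} (hu : u ∈ e)
    (w : Fin n → D) : vecMulVec u w ∈ Lsub e :=
  fun j => e.smul_mem (MulOpposite.op (w j)) hu

theorem exists_eq_vecMulVec_of_mem_Rsub_of_mem_Lsub {x : Fin n → D} {y : Fin m → D}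
    (hy : y ≠ 0) {M : Matrix (Fin m) (Fin n) D} (hR : M ∈ Rsub (D ∙ x))
    (hL : M ∈ Lsub (Dᵐᵒᵖ ∙ y)) : ∃ c : D, M = vecMulVec y (c • x) := by
  choose a ha using fun i => mem_span_singleton.mp (hR i)
  choose r hr using fun j => mem_span_singleton.mp (hL j)
  obtain ⟨i₀, hi₀⟩ : ∃ i, y i ≠ 0 := Function.ne_iff.mp hy
  have hcol : ∀ i j, M i j = y i * (r j).unop := fun i j => (congrFun (hr j) i).symm
  have hrow : ∀ i j, M i j = a i * x j := fun i j => (congrFun (ha i) j).symm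
  refine ⟨(y i₀)⁻¹ * a i₀, ext fun i j => ?_⟩
  have hr_eq : (r j).unop = (y i₀)⁻¹ * a i₀ * x j := by
    rw [mul_assoc, ← hrow, hcol, ← mul_assoc, inv_mul_cancel₀ hi₀, one_mul]
  rw [hcol, hr_eq, vecMulVec_apply, Pi.smul_apply, smul_eq_mul]

end VecMulVec

section Orthogonal

variable {m n : ℕ}

theorem perpSet_image_mulVec_span_singleton (B : Matrix (Fin m) (Fin n) D) (y : Fin n → D) :
    perpSet (B.mulVec '' ((Dᵐᵒᵖ ∙ y : Submodule Dᵐᵒᵖ (Fin n → D)) : Set (Fin n → D))) =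
      {u | u ⬝ᵥ B *ᵥ y = 0} := by
  ext u
  refine ⟨fun h => h _ ⟨y, mem_span_singleton_self y, rfl⟩, fun h v hv => ?_⟩
  obtain ⟨_, hv', rfl⟩ := hv
  obtain ⟨r, rfl⟩ := mem_span_singleton.mp hv'
  change u ⬝ᵥ B *ᵥ (r • y) = 0
  rw [mulVec_smul, dotProduct_smul, h, smul_zero]

theorem finrank_ker_dotProduct_add_one {z : Fin n → D} (hz : z ≠ 0) :
    finrank D (LinearMap.ker ((dotProductBilin D Dᵐᵒᵖ).flip z)) + 1 = n := by
  set f := (dotProductBilin D Dᵐᵒᵖ).flip z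
  obtain ⟨i, hi⟩ : ∃ i, z i ≠ 0 := Function.ne_iff.mp hz
  have hrange : finrank D (LinearMap.range f) = 1 := by
    refine le_antisymm ((Submodule.finrank_le _).trans (finrank_self D).le)
      (Submodule.one_le_finrank_iff.mpr ((Submodule.ne_bot_iff _).mpr
        ⟨f (Pi.single i 1), ⟨_, rfl⟩, ?_⟩))
    simpa [f, single_dotProduct] using hi
  have := LinearMap.finrank_range_add_finrank_ker f
  rw [hrange, finrank_fin_fun] at this
  omega

theorem coe_span_singleton_eq_setOf_dotProduct_eq_zero_iff {x z : Fin 2 → D} (hx : x ≠ 0)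
    (hz : z ≠ 0) : ((D ∙ x : Submodule D (Fin 2 → D)) : Set (Fin 2 → D)) = {u | u ⬝ᵥ z = 0} ↔
      x ⬝ᵥ z = 0 := by
  set K := LinearMap.ker ((dotProductBilin D Dᵐᵒᵖ).flip z)
  change _ = (K : Set (Fin 2 → D)) ↔ _
  refine ⟨fun h => (h ▸ mem_span_singleton_self x : x ∈ (K : Set _)), fun h => ?_⟩
  refine congrArg _ (Submodule.eq_of_le_of_finrank_eq ((span_singleton_le_iff_mem _ _).mpr h) ?_)
  have hK : finrank D K + 1 = 2 := finrank_ker_dotProduct_add_one hz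
  rw [finrank_span_singleton hx]
  omega

end Orthogonal

section Adjacency

variable {A B : Matrix (Fin 2) (Fin 2) D} {x y : Fin 2 → D}

theorem not_adjacent_vecMulVec_of_dotProduct_mulVec_eq_zero (hBA : B * A = 1)
    (hAB : A * B = 1) (h : x ⬝ᵥ B *ᵥ y = 0) (c : D) : ¬Adjacent (vecMulVec y (c • x)) A := by
  have hdot : (c • x) ᵥ* B ⬝ᵥ y = 0 := by
    rw [smul_vecMul, smul_dotProduct, ← dotProduct_mulVec, h, smul_zero]
  rw [Adjacent, rowRank_sub_eq_rowRank_mul_sub_one hBA hAB, vecMulVec_mul,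
    rowRank_vecMulVec_sub_one_of_dotProduct_eq_zero hdot]
  omega

theorem adjacent_vecMulVec_of_dotProduct_mulVec_ne_zero (hA : rowRank A = 2) (hBA : B * A = 1)
    (hAB : A * B = 1) (h : x ⬝ᵥ B *ᵥ y ≠ 0) :
    Adjacent (vecMulVec y ((x ⬝ᵥ B *ᵥ y)⁻¹ • x)) A := by
  have hdot : ((x ⬝ᵥ B *ᵥ y)⁻¹ • x) ᵥ* B ⬝ᵥ y = 1 := by
    rw [smul_vecMul, smul_dotProduct, ← dotProduct_mulVec, smul_eq_mul, inv_mul_cancel₀ h]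
  have hne : vecMulVec y ((x ⬝ᵥ B *ᵥ y)⁻¹ • x) - A ≠ 0 := fun h0 => by
    have := rowRank_vecMulVec_le_one y ((x ⬝ᵥ B *ᵥ y)⁻¹ • x)
    rw [sub_eq_zero.mp h0] at this
    omega
  have hpos := mt rowRank_eq_zero_iff.mp hne
  rw [Adjacent]
  rw [rowRank_sub_eq_rowRank_mul_sub_one hBA hAB, vecMulVec_mul] at hpos ⊢
  have hw : ((x ⬝ᵥ B *ᵥ y)⁻¹ • x) ᵥ* B ≠ 0 := fun hw => by
    rw [hw, zero_dotProduct] at hdot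
    exact zero_ne_one hdot
  have hlt := rowRank_lt_of_vecMul_eq_zero hw (vecMul_vecMulVec_sub_one_of_dotProduct_eq_one hdot)
  omega

theorem exists_rank_one_adjacent_iff (hA : rowRank A = 2) (hBA : B * A = 1) (hAB : A * B = 1)
    (hx : x ≠ 0) (hy : y ≠ 0) :
    (∃ M : Matrix (Fin 2) (Fin 2) D,
        M ∈ Rsub (D ∙ x) ∧ M ∈ Lsub (Dᵐᵒᵖ ∙ y) ∧ rowRank M = 1 ∧ Adjacent M A) ↔
      x ⬝ᵥ B *ᵥ y ≠ 0 := by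
  constructor
  · rintro ⟨M, hR, hL, -, hadj⟩ h
    obtain ⟨c, rfl⟩ := exists_eq_vecMulVec_of_mem_Rsub_of_mem_Lsub hy hR hL
    exact not_adjacent_vecMulVec_of_dotProduct_mulVec_eq_zero hBA hAB h c hadj
  · intro h
    refine ⟨_, vecMulVec_mem_Rsub y (smul_mem _ _ (mem_span_singleton_self x)),
      vecMulVec_mem_Lsub (mem_span_singleton_self y) _, rowRank_vecMulVec hy ?_,
      adjacent_vecMulVec_of_dotProduct_mulVec_ne_zero hA hBA hAB h⟩
    exact smul_ne_zero (inv_ne_zero h) hx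

end Adjacency

/-- Corollary 3.6. For an invertible `A ∈ M₂(D)` (with inverse `B`),
`R_d ∩ L_e` contains a rank-1 matrix adjacent to `A` iff `d ≠ (A⁻¹e)^⊥`. -/
theorem stmt5 (A : Matrix (Fin 2) (Fin 2) D) (hA : rowRank A = 2)
    (d : Submodule D (Fin 2 → D)) (hd : Module.finrank D d = 1)
    (e : Submodule Dᵐᵒᵖ (Fin 2 → D)) (he : Module.finrank Dᵐᵒᵖ e = 1)
    (B : Matrix (Fin 2) (Fin 2) D) (hBA : B * A = 1) (hAB : A * B = 1) :
    (∃ M : Matrix (Fin 2) (Fin 2) D,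
        M ∈ Rsub d ∧ M ∈ Lsub e ∧ rowRank M = 1 ∧ Adjacent M A) ↔
      (d : Set (Fin 2 → D)) ≠ perpSet (B.mulVec '' (e : Set (Fin 2 → D))) := by
  obtain ⟨x, hx, rfl⟩ := exists_eq_span_singleton_of_finrank_eq_one hd
  obtain ⟨y, hy, rfl⟩ := exists_eq_span_singleton_of_finrank_eq_one he
  have hBy : B *ᵥ y ≠ 0 := fun h => hy <| by
    rw [← one_mulVec y, ← hAB, ← mulVec_mulVec, h, mulVec_zero]
  rw [exists_rank_one_adjacent_iff hA hBA hAB hx hy, perpSet_image_mulVec_span_singleton,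
    Ne, Ne, coe_span_singleton_eq_setOf_dotProduct_eq_zero_iff hx hBy]
end

section
/- Let D be a division ring, d a 1-dimensional subspace of D², and A ∈ M_2(D) a rank 2 (hence invertible) matrix. Then a matrix M ∈ R_d is adjacent to A if and only if M = A·P for some rank 1 idempotent P ∈ M_2(D) whose row space equals d. (In particular, the set of matrices of R_d that are adjacent to A is in bijection with D and does not contain 0.) -/
open Matrix

variable {D : Type*} [DivisionRing D]

/-! Since `A` is invertible, `M = A * P` with `P = A⁻¹ * M`, and `M - A = A * (P - 1)` has the
rank of `P - 1`. The fixed vectors of `P`, i.e. the kernel of `v ↦ v * (P - 1)`, lie in its row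
space, hence in the line `d`. So `rank (P - 1) = 1` forces, by rank–nullity, the fixed space to be
all of `d`: then `P` fixes its own rows, i.e. it is idempotent with row space `d`. Conversely, for
an idempotent `P` the fixed space is the row space, so `rank (P - 1) + rank P = 2`. -/

section RowRank

variable {m n p : ℕ}

lemma span_rows_eq_range_vecMulLinear (M : Matrix (Fin m) (Fin n) D) :
    Submodule.span D (Set.range fun i => M i) = LinearMap.range M.vecMulLinear :=
  (range_vecMulLinear M).symm

lemma rowRank_eq_finrank_range (M : Matrix (Fin m) (Fin n) D) :
    rowRank M = Module.finrank D (LinearMap.range M.vecMulLinear) := by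
  rw [rowRank, span_rows_eq_range_vecMulLinear]

lemma rowRank_add_finrank_ker (M : Matrix (Fin m) (Fin n) D) :
    rowRank M + Module.finrank D (LinearMap.ker M.vecMulLinear) = m := by
  rw [rowRank_eq_finrank_range, LinearMap.finrank_range_add_finrank_ker, Module.finrank_fin_fun]

lemma vecMulLinear_mul (A : Matrix (Fin m) (Fin n) D) (B : Matrix (Fin n) (Fin p) D) :
    (A * B).vecMulLinear = B.vecMulLinear ∘ₗ A.vecMulLinear :=
  LinearMap.ext fun v => (vecMul_vecMul v A B).symm

lemma range_vecMulLinear_eq_top_of_rowRank_eq {A : Matrix (Fin m) (Fin n) D}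
    (hA : rowRank A = n) : LinearMap.range A.vecMulLinear = ⊤ :=
  Submodule.eq_top_of_finrank_eq (by rw [← rowRank_eq_finrank_range, hA, Module.finrank_fin_fun])

lemma rowRank_mul_of_rowRank_eq {A : Matrix (Fin m) (Fin n) D} (hA : rowRank A = n)
    (N : Matrix (Fin n) (Fin p) D) : rowRank (A * N) = rowRank N := by
  rw [rowRank_eq_finrank_range, rowRank_eq_finrank_range, vecMulLinear_mul,
    LinearMap.range_comp_of_range_eq_top _ (range_vecMulLinear_eq_top_of_rowRank_eq hA)]

lemma exists_mul_eq_one_of_rowRank_eq {A : Matrix (Fin n) (Fin n) D} (hA : rowRank A = n) :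
    ∃ B, A * B = 1 := by
  obtain ⟨B, hBA⟩ := vecMul_surjective_iff_exists_left_inverse.mp
    (LinearMap.range_eq_top.mp (range_vecMulLinear_eq_top_of_rowRank_eq hA))
  exact ⟨B, mul_eq_one_comm.mpr hBA⟩

lemma mul_mem_Rsub {d : Submodule D (Fin n → D)} {M : Matrix (Fin m) (Fin n) D}
    (hM : M ∈ Rsub d) (B : Matrix (Fin p) (Fin m) D) : B * M ∈ Rsub d := fun i => by
  rw [mul_apply_eq_vecMul, vecMul_eq_sum]
  exact d.sum_mem fun j _ => d.smul_mem _ (hM j)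

end RowRank

section FixedVectors

variable {n : ℕ} {P : Matrix (Fin n) (Fin n) D}

lemma mem_ker_vecMulLinear_sub_one {v : Fin n → D} :
    v ∈ LinearMap.ker (P - 1).vecMulLinear ↔ v ᵥ* P = v := by
  rw [LinearMap.mem_ker, vecMulLinear_apply, vecMul_sub, vecMul_one, sub_eq_zero]

lemma ker_vecMulLinear_sub_one_le_range :
    LinearMap.ker (P - 1).vecMulLinear ≤ LinearMap.range P.vecMulLinear :=
  fun v hv => ⟨v, mem_ker_vecMulLinear_sub_one.mp hv⟩

lemma IsIdempotentElem.ker_vecMulLinear_sub_one (hP : IsIdempotentElem P) :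
    LinearMap.ker (P - 1).vecMulLinear = LinearMap.range P.vecMulLinear := by
  refine le_antisymm ker_vecMulLinear_sub_one_le_range ?_
  rintro _ ⟨v, rfl⟩
  rw [mem_ker_vecMulLinear_sub_one, vecMulLinear_apply, vecMul_vecMul, hP.eq]

lemma IsIdempotentElem.rowRank_sub_one_add_rowRank (hP : IsIdempotentElem P) :
    rowRank (P - 1) + rowRank P = n := by
  rw [rowRank_eq_finrank_range P, ← hP.ker_vecMulLinear_sub_one, rowRank_add_finrank_ker]

lemma isIdempotentElem_and_span_eq_of_rowRank_sub_one {d : Submodule D (Fin n → D)}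
    (hd : Module.finrank D d = 1) (hPd : P ∈ Rsub d) (hP : rowRank (P - 1) + 1 = n) :
    IsIdempotentElem P ∧ Submodule.span D (Set.range fun i => P i) = d := by
  have hrange : LinearMap.range P.vecMulLinear ≤ d := by
    rw [← span_rows_eq_range_vecMulLinear, Submodule.span_le]
    rintro _ ⟨i, rfl⟩
    exact hPd i
  have hker : Module.finrank D (LinearMap.ker (P - 1).vecMulLinear) = 1 := by
    have := rowRank_add_finrank_ker (P - 1)
    omega
  have hker_eq : LinearMap.ker (P - 1).vecMulLinear = d :=
    Submodule.eq_of_le_of_finrank_le (ker_vecMulLinear_sub_one_le_range.trans hrange)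
      (by rw [hd, hker])
  refine ⟨funext fun i => ?_, ?_⟩
  · rw [mul_apply_eq_vecMul, ← mem_ker_vecMulLinear_sub_one, hker_eq]
    exact hPd i
  · rw [span_rows_eq_range_vecMulLinear]
    exact le_antisymm hrange (hker_eq ▸ ker_vecMulLinear_sub_one_le_range)

end FixedVectors

/-- from the proof of Lemma 3.7. For a rank-2 matrix `A ∈ M₂(D)` and
a 1-dimensional subspace `d` of `D²`, a matrix `M ∈ R_d` is adjacent to `A` iff
`M = A·P` for some rank-1 idempotent `P` whose row space equals `d`. -/
theorem stmt6 (d : Submodule D (Fin 2 → D)) (hd : Module.finrank D d = 1)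
    (A : Matrix (Fin 2) (Fin 2) D) (hA : rowRank A = 2)
    (M : Matrix (Fin 2) (Fin 2) D) (hM : M ∈ Rsub d) :
    Adjacent M A ↔
      ∃ P : Matrix (Fin 2) (Fin 2) D, P * P = P ∧ rowRank P = 1 ∧
        Submodule.span D (Set.range fun i => P i) = d ∧ M = A * P := by
  have hsub_one (P : Matrix (Fin 2) (Fin 2) D) : A * P - A = A * (P - 1) := by
    rw [mul_sub, mul_one]
  constructor
  · intro hMA
    obtain ⟨B, hAB⟩ := exists_mul_eq_one_of_rowRank_eq hA
    have hM_eq : M = A * (B * M) := by rw [← mul_assoc, hAB, one_mul]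
    have hrank : rowRank (B * M - 1) + 1 = 2 := by
      rw [← rowRank_mul_of_rowRank_eq hA, ← hsub_one, ← hM_eq, show rowRank (M - A) = 1 from hMA]
    obtain ⟨hidem, hspan⟩ :=
      isIdempotentElem_and_span_eq_of_rowRank_sub_one hd (mul_mem_Rsub hM B) hrank
    refine ⟨B * M, hidem, ?_, hspan, hM_eq⟩
    rw [rowRank, hspan, hd]
  · rintro ⟨P, hPP, hP, -, rfl⟩
    have := IsIdempotentElem.rowRank_sub_one_add_rowRank hPP
    rw [Adjacent, hsub_one, rowRank_mul_of_rowRank_eq hA]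
    omega
end
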